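/- The Minkowski question mark function satisfies ?(x) − 1/2 ≤ 201(x − 1/2) for all x ∈ [1/2, 2/3]. -/

import Mathlib

/-- The mediant of two rationals, formed from numerators and denominators
of the reduced fractions. -/
def mediant (a b : ℚ) : ℚ := ((a.num + b.num : ℤ) : ℚ) / ((a.den + b.den : ℕ) : ℚ)

/-- `sb n j` is the `j`-th element `ξ_{j,n}` of the Stern–Brocot sequence `F_n`:
`F_0 = {0/1, 1/1}` and `F_{n+1}` is obtained from `F_n` by inserting the mediant
between every pair of consecutive elements. -/
def sb : ℕ → ℕ → ℚ
  | 0, j => if j = 0 then 0 else 1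
  | n + 1, j => if j % 2 = 0 then sb n (j / 2) else mediant (sb n (j / 2)) (sb n (j / 2 + 1))

open scoped Classical in
/-- The Minkowski question mark function, defined (as in the paper) as the limit
distribution function of the Stern–Brocot sequences:
`?(x) = lim_n |F_n ∩ [0,x]| / 2^n = sup { j/2^n : ξ_{j,n} ≤ x }`. -/
noncomputable def questionMark (x : ℝ) : ℝ :=
  sSup {y : ℝ | ∃ n j : ℕ, j ≤ 2 ^ n ∧ ((sb n j : ℝ) ≤ x) ∧ y = (j : ℝ) / 2 ^ n}

/-!
`?(x)` is the supremum of the dyadics `j / 2 ^ n` whose Stern–Brocot point `sb n j` is `≤ x`.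
The Stern–Brocot point of the dyadic `1/2 + 2^{-(k+2)}` is `(k+2)/(2k+3) = 1/2 + 1/(2(2k+3))`,
so by monotonicity of the Stern–Brocot enumeration a dyadic `j / 2 ^ n` exceeding it forces
`x - 1/2 > 1/(2(2k+3))`. Choosing `k` with `j / 2 ^ n - 1/2 ∈ (2^{-(k+2)}, 2^{-(k+1)}]` and using
`2k + 3 ≤ 3 · 2^k` gives `?(x) - 1/2 ≤ 3 (x - 1/2)` for every `x ≥ 1/2`.
-/

section Mediant

variable {a b : ℚ}

lemma lt_mediant (h : a < b) : a < mediant a b := by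
  rw [Rat.lt_iff] at h
  rw [mediant, lt_div_iff₀ (by positivity)]
  nth_rw 1 [← Rat.num_div_den a]
  rw [div_mul_eq_mul_div, div_lt_iff₀ (by positivity)]
  push_cast
  have : (a.num : ℚ) * b.den < b.num * a.den := by exact_mod_cast h
  linarith

lemma mediant_lt (h : a < b) : mediant a b < b := by
  rw [Rat.lt_iff] at h
  rw [mediant, div_lt_iff₀ (by positivity)]
  nth_rw 2 [← Rat.num_div_den b]
  rw [div_mul_eq_mul_div, lt_div_iff₀ (by positivity)]
  push_cast
  have : (a.num : ℚ) * b.den < b.num * a.den := by exact_mod_cast h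
  linarith

lemma mediant_div_div {p r : ℤ} {q s : ℕ} (hq : 0 < q) (hs : 0 < s)
    (hpq : p.natAbs.Coprime q) (hrs : r.natAbs.Coprime s) :
    mediant (p / q) (r / s) = (p + r) / (q + s) := by
  have num_den {m : ℤ} {n : ℕ} (hn : 0 < n) (hmn : m.natAbs.Coprime n) :
      ((m / n : ℚ).num = m ∧ (m / n : ℚ).den = n) := by
    have hn' : (0 : ℤ) < n := by exact_mod_cast hn
    have hmn' : m.natAbs.Coprime (n : ℤ).natAbs := hmn
    have h1 := Rat.num_div_eq_of_coprime hn' hmn'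
    have h2 := Rat.den_div_eq_of_coprime hn' hmn'
    push_cast at h1 h2
    exact ⟨h1, by exact_mod_cast h2⟩
  obtain ⟨h1, h2⟩ := num_den hq hpq
  obtain ⟨h3, h4⟩ := num_den hs hrs
  rw [mediant, h1, h2, h3, h4]
  push_cast
  ring

end Mediant

lemma sb_two_mul (n m : ℕ) : sb (n + 1) (2 * m) = sb n m := by
  simp [sb]

lemma sb_two_mul_add_one (n m : ℕ) :
    sb (n + 1) (2 * m + 1) = mediant (sb n m) (sb n (m + 1)) := by
  simp [sb, Nat.add_mod, Nat.add_div]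

lemma sb_mul_two_pow (n j k : ℕ) : sb (n + k) (j * 2 ^ k) = sb n j := by
  induction k with
  | zero => simp
  | succ k ih => rw [← add_assoc, pow_succ, ← mul_assoc, mul_comm _ 2, sb_two_mul, ih]

lemma sb_lt_sb_succ (n : ℕ) : ∀ j < 2 ^ n, sb n j < sb n (j + 1) := by
  induction n with
  | zero => simp [sb]
  | succ n ih =>
    intro j hj
    rw [pow_succ] at hj
    obtain ⟨m, rfl | rfl⟩ := Nat.even_or_odd' j
    · rw [sb_two_mul, sb_two_mul_add_one]
      exact lt_mediant (ih m (by omega))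
    · rw [sb_two_mul_add_one, show 2 * m + 1 + 1 = 2 * (m + 1) by ring, sb_two_mul]
      exact mediant_lt (ih m (by omega))

lemma sb_strictMonoOn (n : ℕ) : StrictMonoOn (sb n) (Set.Iic (2 ^ n)) :=
  strictMonoOn_Iic_of_lt_succ fun j hj ↦ by simpa using sb_lt_sb_succ n j hj

lemma sb_lt_sb_of_div_lt {m n i j : ℕ} (hj : j ≤ 2 ^ n)
    (hij : (i : ℝ) / 2 ^ m < (j : ℝ) / 2 ^ n) : sb m i < sb n j := by
  have hlt : i * 2 ^ n < j * 2 ^ m := by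
    rw [div_lt_div_iff₀ (by positivity) (by positivity)] at hij
    exact_mod_cast hij
  have hle : j * 2 ^ m ≤ 2 ^ (n + m) := by
    rw [pow_add]; exact Nat.mul_le_mul_right _ hj
  rw [← sb_mul_two_pow m i n, ← sb_mul_two_pow n j m, add_comm m n]
  exact sb_strictMonoOn (n + m) (hlt.le.trans hle) hle hlt

lemma sb_succ_two_pow (k : ℕ) : sb (k + 1) (2 ^ k) = 1 / 2 := by
  have h := sb_mul_two_pow 1 1 k
  rw [one_mul, add_comm] at h
  rw [h, show 1 = 2 * 0 + 1 from rfl, sb_two_mul_add_one]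
  simp [sb, mediant]

lemma sb_succ_two_pow_add_one (k : ℕ) : sb (k + 1) (2 ^ k + 1) = (k + 1) / (2 * k + 1) := by
  induction k with
  | zero => simp [sb]
  | succ k ih =>
    have hcop : (k + 1).Coprime (2 * k + 1) := by
      rw [show 2 * k + 1 = k + 1 + k by ring, Nat.coprime_self_add_right,
        Nat.coprime_self_add_left]
      exact Nat.coprime_one_left k
    rw [pow_succ, mul_comm, sb_two_mul_add_one, sb_succ_two_pow, ih,
      show (1 / 2 : ℚ) = ((1 : ℤ) : ℚ) / ((2 : ℕ) : ℚ) by norm_num,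
      show ((k : ℚ) + 1) / (2 * k + 1) = ((k + 1 : ℕ) : ℤ) / ((2 * k + 1 : ℕ) : ℚ) by push_cast; rfl,
      mediant_div_div (p := 1) (r := (k + 1 : ℕ)) two_pos (by omega) (by decide) hcop]
    push_cast
    ring

lemma two_mul_add_three_le_three_mul_two_pow (k : ℕ) : 2 * k + 3 ≤ 3 * 2 ^ k := by
  have := k.lt_two_pow_self
  have := k.one_le_two_pow
  omega

lemma sub_half_lt_three_mul_of_sb_le {n j : ℕ} {x : ℝ} (hj : j ≤ 2 ^ n)
    (hhalf : 1 / 2 < (j : ℝ) / 2 ^ n) (hx : (sb n j : ℝ) ≤ x) :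
    (j : ℝ) / 2 ^ n - 1 / 2 < 3 * (x - 1 / 2) := by
  have hj_le_one : (j : ℝ) / 2 ^ n ≤ 1 := (div_le_one (by positivity)).mpr (by exact_mod_cast hj)
  obtain ⟨k, hk_lt, hk_le⟩ := exists_nat_pow_near_of_lt_one (x := 2 * ((j : ℝ) / 2 ^ n - 1 / 2))
    (by linarith) (by linarith) (by norm_num : (0 : ℝ) < 1 / 2) (by norm_num)
  rw [one_div_pow] at hk_lt hk_le
  have hidx : ((2 ^ (k + 1) + 1 : ℕ) : ℝ) / 2 ^ (k + 2) < j / 2 ^ n := by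
    have : ((2 ^ (k + 1) + 1 : ℕ) : ℝ) / 2 ^ (k + 2) = 1 / 2 + 1 / 2 ^ (k + 1) / 2 := by
      push_cast; field_simp; ring
    linarith
  have hsb : ((k : ℝ) + 1 + 1) / (2 * (k + 1) + 1) < sb n j := by
    have h := sb_lt_sb_of_div_lt hj hidx
    rw [sb_succ_two_pow_add_one] at h
    simpa using (Rat.cast_lt (K := ℝ)).mpr h
  have hxk : 1 / (2 * (2 * k + 3)) < x - 1 / 2 := by
    have : ((k : ℝ) + 1 + 1) / (2 * (k + 1) + 1) = 1 / 2 + 1 / (2 * (2 * k + 3)) := by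
      field_simp; ring
    linarith
  have hpow : (2 * k + 3 : ℝ) ≤ 3 * 2 ^ k := by
    exact_mod_cast two_mul_add_three_le_three_mul_two_pow k
  calc (j : ℝ) / 2 ^ n - 1 / 2 ≤ 1 / 2 ^ k / 2 := by linarith
    _ ≤ 3 * (1 / (2 * (2 * k + 3))) := by
      rw [div_div, mul_one_div, div_le_div_iff₀ (by positivity) (by positivity)]
      linarith
    _ < 3 * (x - 1 / 2) := by linarith

lemma questionMark_sub_half_le_three_mul {x : ℝ} (hx : 1 / 2 ≤ x) :
    questionMark x - 1 / 2 ≤ 3 * (x - 1 / 2) := by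
  suffices questionMark x ≤ 1 / 2 + 3 * (x - 1 / 2) by linarith
  refine Real.sSup_le ?_ (by linarith)
  rintro _ ⟨n, j, hj, hsb, rfl⟩
  rcases le_or_gt ((j : ℝ) / 2 ^ n) (1 / 2) with hle | hlt
  · linarith
  · linarith [sub_half_lt_three_mul_of_sb_le hj hlt hsb]

/-- The Minkowski question mark function satisfies
`?(x) − 1/2 ≤ 201(x − 1/2)` for all `x ∈ [1/2, 2/3]`. -/
theorem questionMark_sub_half_le (x : ℝ) (hx : x ∈ Set.Icc (1 / 2 : ℝ) (2 / 3)) :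
    questionMark x - 1 / 2 ≤ 201 * (x - 1 / 2) := by
  linarith [questionMark_sub_half_le_three_mul hx.1, hx.1]
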